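/- arXiv:2111.04979 — 2 statements merged into one kernel-verified Lean document; each statement's English description precedes it below -/
import Mathlib

section
/- Uniform estimation-error bound over one horizon (Eq. (11)): Let A in R^{n x n}, C in R^{p x n}, and suppose there exist c_beta >= 1, lambda_beta in (0,1), c_gamma > 0 such that for every d in R^n and tau in N: |A^tau d| <= max( c_beta lambda_beta^tau |d| , c_gamma max_{0 <= k <= tau-1} |C A^k d| ). Let p1, p2, r1, r2, rho, L be positive with p1 <= p2, r1 <= r2, L >= 1, and suppose 2 c_gamma sqrt(2 rho p2 / r1) <= 1. Let e0, ehat0 in R^n, d = ehat0 + e0, and sigmahat(0),...,sigmahat(L-1), v(0),...,v(L-1) in R^p satisfy: (i) C A^k d = v(k) - sigmahat(k) for all 0 <= k <= L-1; (ii) |ehat0| <= max( sqrt(2 p2/p1) |e0| , sqrt(2 L r2/(rho p1)) V ); (iii) max_{0<=k<=L-1} |sigmahat(k)| <= max( sqrt(2 rho p2 / r1) |e0| , sqrt(2 L r2 / r1) V ), where V = max_{0<=k<=L-1} |v(k)|. Then, with c3 = 2 c_beta sqrt(2 p2/p1) and c_e = max( 2 c_beta sqrt(2 L r2/(rho p1))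 , 2 c_gamma sqrt(2 L r2/r1) ), for every t in {0,...,L-1}: |A^t d| <= max( c3 |e0| , c_e V ). -/
open Matrix BigOperators

/-- Euclidean norm of a vector in `Fin k → ℝ`. -/
noncomputable def vecEnorm {k : ℕ} (s : Fin k → ℝ) : ℝ := Real.sqrt (∑ i, s i ^ 2)

/-- Maximum of `f 0, …, f (τ-1)`, taken as `0` for `τ = 0`. -/
noncomputable def maxUpTo (τ : ℕ) (f : ℕ → ℝ) : ℝ := (Finset.range τ).fold max 0 f


lemma vecEnorm_eq_norm {k : ℕ} (s : Fin k → ℝ) :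
    vecEnorm s = ‖(WithLp.equiv 2 (Fin k → ℝ)).symm s‖ := by
  simp [vecEnorm, EuclideanSpace.norm_eq, Real.norm_eq_abs, sq_abs]

lemma vecEnorm_nonneg {k : ℕ} (s : Fin k → ℝ) : 0 ≤ vecEnorm s := Real.sqrt_nonneg _

lemma vecEnorm_add_le {k : ℕ} (x y : Fin k → ℝ) : vecEnorm (x + y) ≤ vecEnorm x + vecEnorm y := by
  simp only [vecEnorm_eq_norm]
  rw [show (WithLp.equiv 2 (Fin k → ℝ)).symm (x + y)
      = (WithLp.equiv 2 (Fin k → ℝ)).symm x + (WithLp.equiv 2 (Fin k → ℝ)).symm y from rfl]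
  exact norm_add_le _ _

lemma vecEnorm_sub_le {k : ℕ} (x y : Fin k → ℝ) : vecEnorm (x - y) ≤ vecEnorm x + vecEnorm y := by
  have := vecEnorm_add_le x (-y)
  simpa [sub_eq_add_neg, show vecEnorm (-y) = vecEnorm y by simp [vecEnorm]] using this

lemma maxUpTo_nonneg (τ : ℕ) (f : ℕ → ℝ) : 0 ≤ maxUpTo τ f :=
  (Finset.le_fold_max _).2 (Or.inl le_rfl)

lemma le_maxUpTo {τ k : ℕ} (f : ℕ → ℝ) (h : k < τ) : f k ≤ maxUpTo τ f :=
  (Finset.le_fold_max _).2 (Or.inr ⟨k, Finset.mem_range.2 h, le_rfl⟩)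

lemma maxUpTo_le {τ : ℕ} {f : ℕ → ℝ} {M : ℝ} (hM : 0 ≤ M) (h : ∀ k < τ, f k ≤ M) :
    maxUpTo τ f ≤ M :=
  (Finset.fold_max_le _).2 ⟨hM, fun k hk => h k (Finset.mem_range.1 hk)⟩


set_option maxHeartbeats 1000000 in
/-- Uniform estimation-error bound over one horizon (Eq. (11)). -/
theorem uniform_error_bound_over_horizon
    {n p : ℕ} (A : Matrix (Fin n) (Fin n) ℝ) (C : Matrix (Fin p) (Fin n) ℝ)
    (cbeta lambeta cgamma : ℝ) (hcbeta : 1 ≤ cbeta)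
    (hlambeta : lambeta ∈ Set.Ioo (0 : ℝ) 1) (hcgamma : 0 < cgamma)
    (huoss : ∀ (d : Fin n → ℝ) (τ : ℕ),
      vecEnorm ((A ^ τ).mulVec d) ≤
        max (cbeta * lambeta ^ τ * vecEnorm d)
          (cgamma * maxUpTo τ (fun k => vecEnorm (C.mulVec ((A ^ k).mulVec d)))))
    (p1 p2 r1 r2 ρ : ℝ) (L : ℕ)
    (hp1 : 0 < p1) (hp2 : 0 < p2) (hr1 : 0 < r1) (hr2 : 0 < r2) (hρ : 0 < ρ)
    (hL : 1 ≤ L) (hp12 : p1 ≤ p2) (hr12 : r1 ≤ r2)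
    (hsmall : 2 * cgamma * Real.sqrt (2 * ρ * p2 / r1) ≤ 1)
    (e0 ehat0 d : Fin n → ℝ) (hd : d = ehat0 + e0)
    (σhat v : ℕ → Fin p → ℝ)
    (hout : ∀ k, k < L → C.mulVec ((A ^ k).mulVec d) = v k - σhat k)
    (hehat0 : vecEnorm ehat0 ≤
      max (Real.sqrt (2 * p2 / p1) * vecEnorm e0)
        (Real.sqrt (2 * (L : ℝ) * r2 / (ρ * p1)) * maxUpTo L (fun k => vecEnorm (v k))))
    (hσhat : maxUpTo L (fun k => vecEnorm (σhat k)) ≤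
      max (Real.sqrt (2 * ρ * p2 / r1) * vecEnorm e0)
        (Real.sqrt (2 * (L : ℝ) * r2 / r1) * maxUpTo L (fun k => vecEnorm (v k)))) :
    ∀ t, t < L →
      vecEnorm ((A ^ t).mulVec d) ≤
        max (2 * cbeta * Real.sqrt (2 * p2 / p1) * vecEnorm e0)
          (max (2 * cbeta * Real.sqrt (2 * (L : ℝ) * r2 / (ρ * p1)))
              (2 * cgamma * Real.sqrt (2 * (L : ℝ) * r2 / r1)) *
            maxUpTo L (fun k => vecEnorm (v k))) := by
  intro t ht
  set V := maxUpTo L (fun k => vecEnorm (v k)) with hVdef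
  set S := maxUpTo L (fun k => vecEnorm (σhat k)) with hSdef
  set a := Real.sqrt (2 * p2 / p1) with hadef
  set b := Real.sqrt (2 * (L : ℝ) * r2 / (ρ * p1)) with hbdef
  set c := Real.sqrt (2 * (L : ℝ) * r2 / r1) with hcdef
  set s := Real.sqrt (2 * ρ * p2 / r1) with hsdef
  have hV0 : 0 ≤ V := maxUpTo_nonneg _ _
  have hS0 : 0 ≤ S := maxUpTo_nonneg _ _
  have hne0 : 0 ≤ vecEnorm e0 := vecEnorm_nonneg _
  have hL1 : (1 : ℝ) ≤ (L : ℝ) := by exact_mod_cast hL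
  have ha0 : 0 ≤ a := Real.sqrt_nonneg _
  have hb0 : 0 ≤ b := Real.sqrt_nonneg _
  have hc0 : 0 ≤ c := Real.sqrt_nonneg _
  have ha1 : 1 ≤ a := by
    rw [hadef, show (1:ℝ) = Real.sqrt 1 by simp]
    apply Real.sqrt_le_sqrt
    rw [le_div_iff₀ hp1]; nlinarith
  have hc1 : 1 ≤ c := by
    rw [hcdef, show (1:ℝ) = Real.sqrt 1 by simp]
    apply Real.sqrt_le_sqrt
    rw [le_div_iff₀ hr1]; nlinarith
  have hγs : cgamma * s ≤ 1 / 2 := by linarith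
  -- bound on vecEnorm d
  have hdle : vecEnorm d ≤ 2 * max (a * vecEnorm e0) (b * V) := by
    have h1 : vecEnorm d ≤ vecEnorm ehat0 + vecEnorm e0 := by
      rw [hd]; exact vecEnorm_add_le _ _
    have h2 : vecEnorm e0 ≤ max (a * vecEnorm e0) (b * V) :=
      le_trans (by nlinarith) (le_max_left _ _)
    linarith
  refine le_trans (huoss d t) (max_le ?_ ?_)
  · -- branch A
    have hlt : lambeta ^ t ≤ 1 := pow_le_one₀ hlambeta.1.le hlambeta.2.le
    have hlt0 : 0 ≤ lambeta ^ t := pow_nonneg hlambeta.1.le t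
    have hEd0 : 0 ≤ vecEnorm d := vecEnorm_nonneg _
    have key : cbeta * lambeta ^ t * vecEnorm d ≤ cbeta * (2 * max (a * vecEnorm e0) (b * V)) := by
      have h1 : cbeta * lambeta ^ t ≤ cbeta :=
        mul_le_of_le_one_right (by linarith) hlt
      have h1' := mul_le_mul_of_nonneg_right h1 hEd0
      have h2 : cbeta * vecEnorm d ≤ cbeta * (2 * max (a * vecEnorm e0) (b * V)) :=
        mul_le_mul_of_nonneg_left hdle (by linarith)
      linarith
    refine le_trans key ?_
    rcases le_total (a * vecEnorm e0) (b * V) with h | h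
    · rw [max_eq_right h]
      have h3 : 2 * cbeta * b * V ≤ max (2 * cbeta * b) (2 * cgamma * c) * V :=
        mul_le_mul_of_nonneg_right (le_max_left _ _) hV0
      calc cbeta * (2 * (b * V)) = 2 * cbeta * b * V := by ring
        _ ≤ max (2 * cbeta * b) (2 * cgamma * c) * V := h3
        _ ≤ _ := le_max_right _ _
    · rw [max_eq_left h]
      calc cbeta * (2 * (a * vecEnorm e0)) = 2 * cbeta * a * vecEnorm e0 := by ring
        _ ≤ _ := le_max_left _ _
  · -- branch B
    have hM : maxUpTo t (fun k => vecEnorm (C.mulVec ((A ^ k).mulVec d))) ≤ V + S := by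
      apply maxUpTo_le (by linarith)
      intro k hk
      rw [hout k (lt_trans hk ht)]
      have h1 : vecEnorm (v k) ≤ V := le_maxUpTo (fun k => vecEnorm (v k)) (lt_trans hk ht)
      have h2 : vecEnorm (σhat k) ≤ S := le_maxUpTo (fun k => vecEnorm (σhat k)) (lt_trans hk ht)
      exact le_trans (vecEnorm_sub_le _ _) (add_le_add h1 h2)
    have hstep := mul_le_mul_of_nonneg_left hM hcgamma.le
    rw [mul_add] at hstep
    refine le_trans hstep ?_
    have hVc : V ≤ c * V := by nlinarith
    have hcV : cgamma * V ≤ cgamma * (c * V) := mul_le_mul_of_nonneg_left hVc hcgamma.le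
    have hmaxV : 2 * cgamma * c * V ≤ max (2 * cbeta * b) (2 * cgamma * c) * V :=
      mul_le_mul_of_nonneg_right (le_max_right _ _) hV0
    rcases le_total (s * vecEnorm e0) (c * V) with h | h
    · rw [max_eq_right h] at hσhat
      have hSc : cgamma * S ≤ cgamma * (c * V) :=
        mul_le_mul_of_nonneg_left hσhat hcgamma.le
      have : cgamma * V + cgamma * S ≤ 2 * cgamma * c * V := by linarith
      exact le_trans this (le_trans hmaxV (le_max_right (2 * cbeta * a * vecEnorm e0) _))
    · rw [max_eq_left h] at hσhat
      have hSe : cgamma * S ≤ cgamma * (s * vecEnorm e0) :=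
        mul_le_mul_of_nonneg_left hσhat hcgamma.le
      have hhalf : cgamma * s * vecEnorm e0 ≤ (1/2) * vecEnorm e0 :=
        mul_le_mul_of_nonneg_right hγs hne0
      have h1 : cgamma * V + cgamma * S ≤ cgamma * c * V + (1/2) * vecEnorm e0 := by
        have heq : cgamma * (s * vecEnorm e0) = cgamma * s * vecEnorm e0 := by ring
        rw [heq] at hSe
        linarith
      refine le_trans h1 ?_
      have h2ca : (1:ℝ) ≤ 2 * cbeta * a := by
        have hca : (1:ℝ) * 1 ≤ cbeta * a := mul_le_mul hcbeta ha1 zero_le_one (by linarith)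
        linarith
      have hR1 : (1/2) * vecEnorm e0 ≤ (1/2) * (2 * cbeta * a * vecEnorm e0) := by
        have := mul_le_mul_of_nonneg_right h2ca hne0
        linarith
      have hR2 : cgamma * c * V ≤ (1/2) * (max (2 * cbeta * b) (2 * cgamma * c) * V) := by
        linarith
      rcases le_total (2 * cbeta * a * vecEnorm e0) (max (2 * cbeta * b) (2 * cgamma * c) * V) with h2 | h2
      · rw [max_eq_right h2]; linarith
      · rw [max_eq_left h2]; linarith
end

section
/- Induction claim for the MHE error sequence: Let L >= 2 be an integer, lambda in (0,1), c3 >= 1, c_e >= 0. Let e : N -> [0, infinity) and w : N -> [0, infinity) be sequences satisfying: (i) for every t in {0,...,L-2}: e(t) <= max( c3 e(0) , c_e max_{0 <= k <= t-1} w(k) ) (the second term taken as 0 for t = 0); and (ii) for every k in N: e(k + L - 1) <= max( lambda e(k) , c_e max_{k <= j <= k+L-1} w(j) ). Then for every j >= 0 and every t in {0,...,L-2}: e(t + j(L-1)) <= max( lambda^j c3 e(0) , c_e max_{j(L-1) <= k <= j(L-1)+t} w(k) , max_{0 <= i <= j-1} lambda^{j-i-1} c_e max_{i(L-1) <= k <=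 (i+1)(L-1)-1} w(k) ), where maxima over empty index sets are taken as 0. -/
open BigOperators

/-- Maximum of `f a, …, f b`, taken as `0` when the range is empty. -/
noncomputable def maxIcc (a b : ℕ) (f : ℕ → ℝ) : ℝ := (Finset.Icc a b).fold max 0 f

private lemma fold_max_nonneg (s : Finset ℕ) (f : ℕ → ℝ) : 0 ≤ s.fold max 0 f :=
  (Finset.le_fold_max _).mpr (Or.inl le_rfl)

private lemma le_fold_max' {s : Finset ℕ} {f : ℕ → ℝ} {a : ℕ} (h : a ∈ s) :
    f a ≤ s.fold max 0 f := (Finset.le_fold_max _).mpr (Or.inr ⟨a, h, le_rfl⟩)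

private lemma fold_max_le' {s : Finset ℕ} {f : ℕ → ℝ} {x : ℝ} (hx : 0 ≤ x)
    (h : ∀ a ∈ s, f a ≤ x) : s.fold max 0 f ≤ x :=
  (Finset.fold_max_le _).mpr ⟨hx, h⟩

private lemma mul_fold_max (c : ℝ) (hc : 0 ≤ c) (s : Finset ℕ) (f : ℕ → ℝ) :
    c * s.fold max 0 f = s.fold max 0 (fun a => c * f a) := by
  classical
  induction s using Finset.induction with
  | empty => simp
  | @insert a s h ih =>
    rw [Finset.fold_insert h, Finset.fold_insert h, mul_max_of_nonneg _ _ hc, ih]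

private lemma maxIcc_nonneg (a b : ℕ) (f : ℕ → ℝ) : 0 ≤ maxIcc a b f :=
  fold_max_nonneg _ _

private lemma le_maxIcc {a b k : ℕ} (f : ℕ → ℝ) (h : a ≤ k) (h' : k ≤ b) :
    f k ≤ maxIcc a b f := le_fold_max' (Finset.mem_Icc.mpr ⟨h, h'⟩)

private lemma maxIcc_le {a b : ℕ} {f : ℕ → ℝ} {x : ℝ} (hx : 0 ≤ x)
    (h : ∀ k, a ≤ k → k ≤ b → f k ≤ x) : maxIcc a b f ≤ x :=
  fold_max_le' hx (fun k hk => h k (Finset.mem_Icc.mp hk).1 (Finset.mem_Icc.mp hk).2)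

/-- Induction claim for the MHE error sequence. -/
theorem mhe_error_induction
    (L : ℕ) (hL : 2 ≤ L) (lam c3 ce : ℝ)
    (hlam : lam ∈ Set.Ioo (0 : ℝ) 1) (hc3 : 1 ≤ c3) (hce : 0 ≤ ce)
    (e w : ℕ → ℝ) (he : ∀ t, 0 ≤ e t) (hw : ∀ t, 0 ≤ w t)
    (hinit : ∀ t, t ≤ L - 2 → e t ≤ max (c3 * e 0) (ce * maxUpTo t w))
    (hcontr : ∀ k, e (k + L - 1) ≤
      max (lam * e k) (ce * maxIcc k (k + L - 1) w)) :
    ∀ (j t : ℕ), t ≤ L - 2 →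
      e (t + j * (L - 1)) ≤
        max (lam ^ j * c3 * e 0)
          (max (ce * maxIcc (j * (L - 1)) (j * (L - 1) + t) w)
            ((Finset.range j).fold max 0 (fun i =>
              lam ^ (j - i - 1) * ce * maxIcc (i * (L - 1)) ((i + 1) * (L - 1) - 1) w))) := by
  obtain ⟨M, rfl⟩ : ∃ M, L = M + 2 := ⟨L - 2, by omega⟩
  have hlam0 : (0:ℝ) ≤ lam := le_of_lt hlam.1
  have hlam1 : lam ≤ 1 := le_of_lt hlam.2
  have hLm : M + 2 - 1 = M + 1 := by omega
  rw [hLm]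
  intro j
  induction j with
  | zero =>
    intro t ht
    have ht' : t ≤ M := by omega
    have h1 := hinit t ht
    simp only [Nat.zero_mul, zero_add, pow_zero, one_mul, Finset.range_zero,
      Finset.fold_empty]
    refine h1.trans (max_le_max le_rfl (le_max_of_le_left ?_))
    refine mul_le_mul_of_nonneg_left ?_ hce
    refine fold_max_le' (maxIcc_nonneg _ _ _) (fun a ha => ?_)
    exact le_maxIcc w (Nat.zero_le a) (by simp only [Finset.mem_range] at ha; omega)
  | succ j ih =>
    intro t ht
    have htM : t ≤ M := by omega
    obtain ⟨P, hP⟩ : ∃ P, j * (M + 1) = P := ⟨_, rfl⟩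
    have hmul : (j + 1) * (M + 1) = P + (M + 1) := by rw [← hP]; ring
    have harith : t + (j + 1) * (M + 1) = t + P + (M + 1) := by rw [hmul]; omega
    rw [harith, hmul]
    have hkey := hcontr (t + P)
    rw [show t + P + (M + 2) - 1 = t + P + (M + 1) from by omega] at hkey
    have hterm : ce * maxIcc P (P + M) w ≤
        (Finset.range (j+1)).fold max 0 (fun i =>
          lam ^ (j + 1 - i - 1) * ce * maxIcc (i * (M + 1)) ((i + 1) * (M + 1) - 1) w) := by
      have hmem := le_fold_max' (f := fun i =>
          lam ^ (j + 1 - i - 1) * ce * maxIcc (i * (M + 1)) ((i + 1) * (M + 1) - 1) w)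
        (Finset.mem_range.mpr (Nat.lt_succ_self j))
      rw [show j + 1 - j - 1 = 0 from by omega, pow_zero, one_mul, hP, hmul,
        show P + (M + 1) - 1 = P + M from by omega] at hmem
      exact hmem
    refine hkey.trans (max_le ?_ ?_)
    · -- contraction branch
      have hIH := ih t htM
      rw [hP] at hIH
      have h2 : lam * e (t + P) ≤ lam * (max (lam ^ j * c3 * e 0)
          (max (ce * maxIcc P (P + t) w)
            ((Finset.range j).fold max 0 (fun i =>
              lam ^ (j - i - 1) * ce * maxIcc (i * (M + 1)) ((i + 1) * (M + 1) - 1) w)))) :=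
        mul_le_mul_of_nonneg_left hIH hlam0
      rw [mul_max_of_nonneg _ _ hlam0, mul_max_of_nonneg _ _ hlam0] at h2
      refine h2.trans (max_le ?_ (max_le ?_ ?_))
      · exact le_max_of_le_left (le_of_eq (by ring))
      · have hXY : maxIcc P (P + t) w ≤ maxIcc P (P + M) w :=
          maxIcc_le (maxIcc_nonneg _ _ _) (fun k hk hk' => le_maxIcc w hk (by omega))
        have hx0 : (0:ℝ) ≤ ce * maxIcc P (P + t) w :=
          mul_nonneg hce (maxIcc_nonneg _ _ _)
        have hstep : lam * (ce * maxIcc P (P + t) w) ≤ 1 * (ce * maxIcc P (P + M) w) :=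
          mul_le_mul hlam1 (mul_le_mul_of_nonneg_left hXY hce) hx0 zero_le_one
        rw [one_mul] at hstep
        exact le_max_of_le_right (le_max_of_le_right (hstep.trans hterm))
      · rw [mul_fold_max lam hlam0]
        refine le_max_of_le_right (le_max_of_le_right
          (fold_max_le' (fold_max_nonneg _ _) (fun i hi => ?_)))
        have hij : i < j := Finset.mem_range.mp hi
        have hpow : lam * (lam ^ (j - i - 1) * ce *
            maxIcc (i * (M + 1)) ((i + 1) * (M + 1) - 1) w)
            = lam ^ (j + 1 - i - 1) * ce * maxIcc (i * (M + 1)) ((i + 1) * (M + 1) - 1) w := by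
          rw [show j + 1 - i - 1 = (j - i - 1) + 1 from by omega, pow_succ]
          ring
        rw [hpow]
        have hmem2 : i ∈ Finset.range (j + 1) := Finset.mem_range.mpr (by omega)
        exact le_fold_max' (f := fun i => lam ^ (j + 1 - i - 1) * ce *
          maxIcc (i * (M + 1)) ((i + 1) * (M + 1) - 1) w) hmem2
    · -- noise branch
      have hnoise : ce * maxIcc (t + P) (t + P + (M + 1)) w ≤
          max (ce * maxIcc (P + (M + 1)) (P + (M + 1) + t) w)
            ((Finset.range (j+1)).fold max 0 (fun i =>
              lam ^ (j + 1 - i - 1) * ce * maxIcc (i * (M + 1)) ((i + 1) * (M + 1) - 1) w)) := by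
        simp only [maxIcc]
        rw [mul_fold_max ce hce]
        refine fold_max_le' (le_max_of_le_right (fold_max_nonneg _ _)) (fun a ha => ?_)
        simp only [Finset.mem_Icc] at ha
        by_cases hcase : a ≤ P + M
        · refine le_max_of_le_right ((mul_le_mul_of_nonneg_left
            (le_maxIcc w (show P ≤ a by omega) hcase) hce).trans ?_)
          simpa only [maxIcc] using hterm
        · refine le_max_of_le_left (mul_le_mul_of_nonneg_left
            (le_fold_max' (Finset.mem_Icc.mpr ⟨by omega, by omega⟩)) hce)
      exact le_max_of_le_right hnoise
end
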